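/- arXiv:1910.06803 — 3 statements merged into one kernel-verified Lean document; each statement's English description precedes it below -/
import Mathlib

section
/- Proposition 1 (product of polar codes is a polar code): Let N_r = 2^{n_r}, N_c = 2^{n_c}, and let F_r ⊆ {0,…,N_r−1} and F_c ⊆ {0,…,N_c−1} be frozen sets of two polar codes with transformation matrices T_{N_r} = T_2^{⊗n_r} and T_{N_c} = T_2^{⊗n_c} over GF(2). Let z_r and z_c be the 0/1 vectors with zeros at the positions of F_r and F_c respectively and ones elsewhere, and set F = { m ∈ {0,…,N_cN_r−1} : (z_c ⊗ z_r)_m = 0 }. Then the set of row-vectorized product codewords { row(T_{N_c}ᵀ · U · T_{N_r}) : U an N_c×N_r matrix over GF(2) with U_{i,j} = 0 whenever i ∈ F_c or j ∈ F_r } equals the polar code { u · T_2^{⊗(n_c+n_r)} : u ∈ GF(2)^{N_cN_r} with u_m = 0 for all m ∈ F }, under the canonical identification of index sets. -/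
/-!
The vec trick `row(Aᵀ U B) = row(U) · (A ⊗ B)` turns the product codeword of `U` into the image
of `row(U)` under `T_{N_c} ⊗ T_{N_r}`, and associativity of the Kronecker product identifies this
matrix with `T₂^{⊗(n_c+n_r)}`. Since `(z_c ⊗ z_r)_{(i,j)} = z_c(i) z_r(j)`, the vector `row(U)`
vanishes on `F` exactly when `U` vanishes on the rows in `F_c` and on the columns in `F_r`; and
every vector is `row(U)` for some `U`.
-/

open Matrix

/-- Row-vectorization of a matrix: the row vector of length `m * n` whose
`(i·n+j)`-th entry is `A i j` (rows juxtaposed head-to-tail). -/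
def rowVec {R : Type*} {m n : ℕ} (A : Matrix (Fin m) (Fin n) R) : Fin (m * n) → R :=
  fun k => A (finProdFinEquiv.symm k).1 (finProdFinEquiv.symm k).2

/-- Kronecker product of an `m × n` matrix and a `p × q` matrix: the `mp × nq`
matrix whose `((i·p+k),(j·q+l))` entry is `A i j * B k l`. -/
def kron {R : Type*} [Mul R] {m n p q : ℕ}
    (A : Matrix (Fin m) (Fin n) R) (B : Matrix (Fin p) (Fin q) R) :
    Matrix (Fin (m * p)) (Fin (n * q)) R :=
  Matrix.of fun i j =>
    A (finProdFinEquiv.symm i).1 (finProdFinEquiv.symm j).1 *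
      B (finProdFinEquiv.symm i).2 (finProdFinEquiv.symm j).2

/-- Kronecker product of row vectors: the row vector of length `m * n` whose
`(i·n+j)`-th entry is `u i * v j`. -/
def kronVec {R : Type*} [Mul R] {m n : ℕ} (u : Fin m → R) (v : Fin n → R) :
    Fin (m * n) → R :=
  fun k => u (finProdFinEquiv.symm k).1 * v (finProdFinEquiv.symm k).2

/-- The polar kernel `T₂ = [[1,0],[1,1]]` over GF(2). -/
def T2 : Matrix (Fin 2) (Fin 2) (ZMod 2) := !![1, 0; 1, 1]

/-- `a`-fold Kronecker power of a square matrix. -/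
def kronPow {R : Type*} [CommRing R] {N : ℕ} (M : Matrix (Fin N) (Fin N) R) :
    (a : ℕ) → Matrix (Fin (N ^ a)) (Fin (N ^ a)) R
  | 0 => 1
  | a + 1 =>
      Matrix.reindex (finCongr (by rw [pow_succ]; ring)) (finCongr (by rw [pow_succ]; ring))
        (kron M (kronPow M a))

/-- The polar transformation matrix `T_{2^n} = T₂^{⊗n}` over GF(2). -/
def Tpow (n : ℕ) : Matrix (Fin (2 ^ n)) (Fin (2 ^ n)) (ZMod 2) := kronPow T2 n

open scoped Kronecker

variable {R : Type*}

section Vectorization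

theorem rowVec_finProdFinEquiv {m n : ℕ} (U : Matrix (Fin m) (Fin n) R) (i : Fin m) (j : Fin n) :
    rowVec U (finProdFinEquiv (i, j)) = U i j := by
  simp only [rowVec, Equiv.symm_apply_apply]

theorem rowVec_surjective {m n : ℕ} :
    Function.Surjective (rowVec : Matrix (Fin m) (Fin n) R → Fin (m * n) → R) := fun u =>
  ⟨of fun i j => u (finProdFinEquiv (i, j)), funext fun k => by
    simp only [rowVec, of_apply, Prod.mk.eta, Equiv.apply_symm_apply]⟩

theorem kronVec_finProdFinEquiv [Mul R] {m n : ℕ} (u : Fin m → R) (v : Fin n → R) (i : Fin m)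
    (j : Fin n) : kronVec u v (finProdFinEquiv (i, j)) = u i * v j := by
  simp only [kronVec, Equiv.symm_apply_apply]

theorem rowVec_eq_vec_transpose {m n : ℕ} (U : Matrix (Fin m) (Fin n) R) :
    rowVec U = vec Uᵀ ∘ finProdFinEquiv.symm :=
  rfl

theorem kron_eq_reindex_kronecker [Mul R] {m n p q : ℕ} (A : Matrix (Fin m) (Fin n) R)
    (B : Matrix (Fin p) (Fin q) R) :
    kron A B = reindex finProdFinEquiv finProdFinEquiv (A ⊗ₖ B) :=
  rfl

theorem rowVec_vecMul_kron [NonUnitalCommSemiring R] {m n p q : ℕ} (A : Matrix (Fin m) (Fin n) R)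
    (U : Matrix (Fin m) (Fin p) R) (B : Matrix (Fin p) (Fin q) R) :
    rowVec U ᵥ* kron A B = rowVec (Aᵀ * U * B) := by
  rw [rowVec_eq_vec_transpose, kron_eq_reindex_kronecker, reindex_apply, submatrix_vecMul_equiv,
    Equiv.symm_symm, Function.comp_assoc, Equiv.symm_comp_self, Function.comp_id,
    vec_vecMul_kronecker, rowVec_eq_vec_transpose, transpose_mul, transpose_mul,
    transpose_transpose, Matrix.mul_assoc]

end Vectorization

section Kron

theorem finCongr_finProdFinEquiv_assoc {m p r : ℕ} (x : Fin m) (y : Fin p) (z : Fin r) :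
    finCongr (Nat.mul_assoc m p r) (finProdFinEquiv (finProdFinEquiv (x, y), z)) =
      finProdFinEquiv (x, finProdFinEquiv (y, z)) := by
  ext
  simp only [finCongr_apply, Fin.val_cast, finProdFinEquiv_apply_val]
  ring

theorem kron_finProdFinEquiv [Mul R] {m n p q : ℕ} (A : Matrix (Fin m) (Fin n) R)
    (B : Matrix (Fin p) (Fin q) R) (i : Fin m) (j : Fin n) (k : Fin p) (l : Fin q) :
    kron A B (finProdFinEquiv (i, k)) (finProdFinEquiv (j, l)) = A i j * B k l := by
  simp only [kron, of_apply, Equiv.symm_apply_apply]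

theorem kron_kron [Semigroup R] {m n p q r s : ℕ} (A : Matrix (Fin m) (Fin n) R)
    (B : Matrix (Fin p) (Fin q) R) (C : Matrix (Fin r) (Fin s) R) :
    kron (kron A B) C =
      reindex (finCongr (Nat.mul_assoc m p r).symm) (finCongr (Nat.mul_assoc n q s).symm)
        (kron A (kron B C)) := by
  ext i j
  obtain ⟨⟨i', z⟩, rfl⟩ := finProdFinEquiv.surjective i
  obtain ⟨⟨x, y⟩, rfl⟩ := finProdFinEquiv.surjective i'
  obtain ⟨⟨j', z'⟩, rfl⟩ := finProdFinEquiv.surjective j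
  obtain ⟨⟨x', y'⟩, rfl⟩ := finProdFinEquiv.surjective j'
  simp only [reindex_apply, submatrix_apply, finCongr_symm, finCongr_finProdFinEquiv_assoc,
    kron_finProdFinEquiv, mul_assoc]

theorem one_kron [MulOneClass R] [Zero R] {p q : ℕ} (B : Matrix (Fin p) (Fin q) R) :
    kron (1 : Matrix (Fin 1) (Fin 1) R) B =
      reindex (finCongr (Nat.one_mul p).symm) (finCongr (Nat.one_mul q).symm) B := by
  ext i j
  obtain ⟨⟨x, y⟩, rfl⟩ := finProdFinEquiv.surjective i
  obtain ⟨⟨x', y'⟩, rfl⟩ := finProdFinEquiv.surjective j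
  rw [kron_finProdFinEquiv, Subsingleton.elim x x', one_apply_eq, one_mul, reindex_apply,
    submatrix_apply]
  congr 1 <;> ext <;> simp [Fin.fin_one_eq_zero x']

theorem kron_reindex_finCongr_left [Mul R] {m m' n n' p q : ℕ} (hm : m = m') (hn : n = n')
    (A : Matrix (Fin m) (Fin n) R) (B : Matrix (Fin p) (Fin q) R) :
    kron (reindex (finCongr hm) (finCongr hn) A) B =
      reindex (finCongr (by rw [hm])) (finCongr (by rw [hn])) (kron A B) := by
  subst hm hn
  rfl

theorem kron_reindex_finCongr_right [Mul R] {m n p p' q q' : ℕ} (hp : p = p') (hq : q = q')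
    (A : Matrix (Fin m) (Fin n) R) (B : Matrix (Fin p) (Fin q) R) :
    kron A (reindex (finCongr hp) (finCongr hq) B) =
      reindex (finCongr (by rw [hp])) (finCongr (by rw [hq])) (kron A B) := by
  subst hp hq
  rfl

end Kron

section KronPow

variable [CommRing R] {N : ℕ} (M : Matrix (Fin N) (Fin N) R)

theorem kronPow_succ (a : ℕ) :
    kronPow M (a + 1) =
      reindex (finCongr (pow_succ' N a).symm) (finCongr (pow_succ' N a).symm)
        (kron M (kronPow M a)) :=
  rfl

theorem reindex_kronPow_of_eq {a b : ℕ} (h : a = b) :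
    reindex (finCongr (by rw [h])) (finCongr (by rw [h])) (kronPow M a) = kronPow M b := by
  subst h
  rfl

theorem reindex_kronPow_add (a b : ℕ) :
    reindex (finCongr (pow_add N a b)) (finCongr (pow_add N a b)) (kronPow M (a + b)) =
      kron (kronPow M a) (kronPow M b) := by
  induction a with
  | zero =>
    rw [← reindex_kronPow_of_eq M (Nat.zero_add b).symm]
    exact (one_kron (kronPow M b)).symm
  | succ a ih =>
    rw [kronPow_succ, kron_reindex_finCongr_left, kron_kron, ← ih, kron_reindex_finCongr_right,
      ← reindex_kronPow_of_eq M (Nat.add_right_comm a b 1)]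
    -- both sides are now `kron M (kronPow M (a + b))` transported along `Fin.cast`s
    rfl

end KronPow

/-- Proposition 1: the set of row-vectorized codewords of the product of two
polar codes with frozen sets `F_c`, `F_r` equals the polar code of length `2^{n_c+n_r}`
with transformation matrix `T₂^{⊗(n_c+n_r)}` and frozen set
`F = { m | (z_c ⊗ z_r)_m = 0 }`, under the canonical identification of index sets. -/
theorem product_of_polar_codes_is_polar_code {n_c n_r : ℕ}
    (F_c : Finset (Fin (2 ^ n_c))) (F_r : Finset (Fin (2 ^ n_r)))
    (z_c : Fin (2 ^ n_c) → ℕ) (z_r : Fin (2 ^ n_r) → ℕ)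
    (hz_c : ∀ i, z_c i = if i ∈ F_c then 0 else 1)
    (hz_r : ∀ j, z_r j = if j ∈ F_r then 0 else 1) :
    { x : Fin (2 ^ n_c * 2 ^ n_r) → ZMod 2 |
        ∃ U : Matrix (Fin (2 ^ n_c)) (Fin (2 ^ n_r)) (ZMod 2),
          (∀ i j, (i ∈ F_c ∨ j ∈ F_r) → U i j = 0) ∧
            x = rowVec ((Tpow n_c)ᵀ * U * Tpow n_r) } =
      { x : Fin (2 ^ n_c * 2 ^ n_r) → ZMod 2 |
        ∃ u : Fin (2 ^ n_c * 2 ^ n_r) → ZMod 2,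
          (∀ m, kronVec z_c z_r m = 0 → u m = 0) ∧
            x = u ᵥ* Matrix.reindex (finCongr (pow_add 2 n_c n_r))
                  (finCongr (pow_add 2 n_c n_r)) (Tpow (n_c + n_r)) } := by
  have frozen_iff (i j) : kronVec z_c z_r (finProdFinEquiv (i, j)) = 0 ↔ i ∈ F_c ∨ j ∈ F_r := by
    rw [kronVec_finProdFinEquiv, hz_c, hz_r]
    split_ifs <;> simp_all
  have product_kernel : reindex (finCongr (pow_add 2 n_c n_r)) (finCongr (pow_add 2 n_c n_r))
      (Tpow (n_c + n_r)) = kron (Tpow n_c) (Tpow n_r) :=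
    reindex_kronPow_add T2 n_c n_r
  rw [product_kernel]
  ext x
  constructor
  · rintro ⟨U, hU, rfl⟩
    refine ⟨rowVec U, fun m hm => ?_, (rowVec_vecMul_kron _ _ _).symm⟩
    obtain ⟨⟨i, j⟩, rfl⟩ := finProdFinEquiv.surjective m
    rw [rowVec_finProdFinEquiv]
    exact hU i j ((frozen_iff i j).1 hm)
  · rintro ⟨u, hu, rfl⟩
    obtain ⟨U, rfl⟩ := rowVec_surjective u
    refine ⟨U, fun i j hij => ?_, rowVec_vecMul_kron _ _ _⟩
    rw [← rowVec_finProdFinEquiv U i j]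
    exact hu _ ((frozen_iff i j).2 hij)
end

section
/- Proposition 2 (row component frozen sets): Let N = N_cN_r with N_c = 2^{n_c}, N_r = 2^{n_r}, and let F ⊆ {0,…,N−1}. Let Z be the N_c × N_r matrix over ℕ with Z(k,l) = 0 if k·N_r+l ∈ F and Z(k,l) = 1 otherwise, and let Z_c = T_{N_c}ᵀ · Z be computed over the natural numbers, with the 0/1 entries of T_{N_c} read as naturals. Then for every i ∈ {0,…,N_c−1} and l ∈ {0,…,N_r−1}: Z_c(i,l) = 0 if and only if, for every u ∈ GF(2)^N with u_m = 0 for all m ∈ F, the l-th entry of the virtual input u_r^i = u · (T_{N_c}^{(·,i)} ⊗ I_{N_r}) equals 0. Hence the frozen set of the i-th row component polar code is F_r^i = { l : Z_c(i,l) = 0 }. -/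
/-!
The `l`-th entry of `u · (T^{(·,i)} ⊗ I)` is `∑_k T(k,i) u_{k N_r + l}`, a GF(2)-linear form
in the entries of `u` in column `l`. It vanishes on all admissible `u` iff every coefficient
sitting on a non-frozen position is zero (test with the unit vectors), and `Z_c(i,l)`, which
counts over ℕ exactly those nonzero coefficients, vanishes under the same condition.
-/

open Matrix

theorem vecMul_kron_col_one_apply {R : Type*} [Semiring R] {m n : ℕ}
    (u : Fin (m * n) → R) (c : Fin m → R) (l : Fin n) :
    (u ᵥ* kron (Matrix.of fun k (_ : Fin 1) => c k) (1 : Matrix (Fin n) (Fin n) R))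
        (finCongr (one_mul n).symm l) =
      ∑ k, u (finProdFinEquiv (k, l)) * c k := by
  have hl : (Fin.cast (one_mul n).symm l).modNat = l :=
    Fin.ext (by simp [Fin.coe_modNat, Nat.mod_eq_of_lt l.isLt])
  rw [vecMul, dotProduct, ← finProdFinEquiv.sum_comp, Fintype.sum_prod_type]
  simp only [kron, of_apply, Equiv.symm_apply_apply]
  simp [one_apply, hl]

theorem forall_linearForm_eq_zero_iff {ι α R : Type*} [Fintype ι]
    [Semiring R] {e : ι → α} (he : Function.Injective e) (S : Finset α) (c : ι → R) :
    (∀ u : α → R, (∀ m ∈ S, u m = 0) → ∑ k, u (e k) * c k = 0) ↔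
      ∀ k, e k ∉ S → c k = 0 := by
  classical
  constructor
  · intro h k hk
    have hu := h (Pi.single (e k) 1) fun m hm => Pi.single_eq_of_ne (ne_of_mem_of_not_mem hm hk) 1
    rw [← hu]
    simp only [Pi.single_apply, he.eq_iff]
    simp
  · intro h u hu
    refine Finset.sum_eq_zero fun k _ => ?_
    by_cases hk : e k ∈ S
    · rw [hu _ hk, zero_mul]
    · rw [h k hk, mul_zero]

theorem sum_val_mul_indicator_eq_zero_iff {ι α : Type*} [Fintype ι] [DecidableEq α] {q : ℕ}
    (e : ι → α) (S : Finset α) (c : ι → ZMod q) :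
    ∑ k, (c k).val * (if e k ∈ S then 0 else 1) = 0 ↔ ∀ k, e k ∉ S → c k = 0 := by
  simp only [Finset.sum_eq_zero_iff, Finset.mem_univ, true_implies]
  refine forall_congr' fun k => ?_
  by_cases hk : e k ∈ S <;> simp [hk, ZMod.val_eq_zero]

/-- Proposition 2, row component frozen sets: with `Z` the 0/1 matrix over
ℕ vanishing exactly on the positions of `F` and `Z_c = T_{N_c}ᵀ * Z` computed over ℕ,
`Z_c(i,l) = 0` iff the `l`-th entry of the virtual input
`u_r^i = u · (T_{N_c}^{(·,i)} ⊗ I_{N_r})` is zero for every admissible `u`; hence the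
frozen set of the `i`-th row component polar code is `F_r^i = { l | Z_c(i,l) = 0 }`. -/
theorem row_component_frozen_set {n_c n_r : ℕ}
    (F : Finset (Fin (2 ^ n_c * 2 ^ n_r)))
    (Z : Matrix (Fin (2 ^ n_c)) (Fin (2 ^ n_r)) ℕ)
    (hZ : ∀ k l, Z k l = if finProdFinEquiv (k, l) ∈ F then 0 else 1)
    (Z_c : Matrix (Fin (2 ^ n_c)) (Fin (2 ^ n_r)) ℕ)
    (hZc : Z_c = ((Tpow n_c).map ZMod.val)ᵀ * Z) :
    ∀ (i : Fin (2 ^ n_c)) (l : Fin (2 ^ n_r)),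
      Z_c i l = 0 ↔
        ∀ u : Fin (2 ^ n_c * 2 ^ n_r) → ZMod 2, (∀ m ∈ F, u m = 0) →
          (u ᵥ* kron (Matrix.of fun k (_ : Fin 1) => Tpow n_c k i)
              (1 : Matrix (Fin (2 ^ n_r)) (Fin (2 ^ n_r)) (ZMod 2)))
            (finCongr (one_mul (2 ^ n_r)).symm l) = 0 := by
  intro i l
  have he : Function.Injective fun k : Fin (2 ^ n_c) => finProdFinEquiv (k, l) :=
    fun a b h => congrArg Prod.fst (finProdFinEquiv.injective h)
  simp only [vecMul_kron_col_one_apply]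
  rw [forall_linearForm_eq_zero_iff he F, ← sum_val_mul_indicator_eq_zero_iff _ F]
  simp only [hZc, mul_apply, transpose_apply, map_apply, hZ]
end

section
/- Proposition 2 (column component frozen sets): Let N = N_cN_r with N_c = 2^{n_c}, N_r = 2^{n_r}, and let F ⊆ {0,…,N−1}. Let Z be the N_c × N_r matrix over ℕ with Z(k,l) = 0 if k·N_r+l ∈ F and Z(k,l) = 1 otherwise, and let Z_r = Z · T_{N_r} be computed over the natural numbers, with the 0/1 entries of T_{N_r} read as naturals. Then for every j ∈ {0,…,N_r−1} and m ∈ {0,…,N_c−1}: Z_r(m,j) = 0 if and only if, for every u ∈ GF(2)^N with u_k = 0 for all k ∈ F, the m-th entry of the virtual input u_c^j = u · (I_{N_c} ⊗ T_{N_r}^{(·,j)}) equals 0. Hence the frozen set of the j-th column component polar code is F_c^j = { m : Z_r(m,j) = 0 }. -/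
/-!
Both sides of the equivalence say that column `j` of `T_{N_r}` vanishes at every row `l` for
which the position `(m, l)` is not frozen. For `Z_r` this is because a sum of natural numbers
vanishes iff every term does. For the virtual input, the `m`-th entry of
`u · (I ⊗ T_{N_r}^{(·,j)})` is `∑_l u(m, l) T_{N_r}(l, j)`, and this linear form vanishes on
every admissible `u` iff it does on the unit vectors at the non-frozen positions.
-/

open Matrix

@[simp]
theorem kron_apply_finProdFinEquiv {R : Type*} [Mul R] {m n p q : ℕ}
    (A : Matrix (Fin m) (Fin n) R) (B : Matrix (Fin p) (Fin q) R)
    (i : Fin m) (j : Fin n) (k : Fin p) (l : Fin q) :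
    kron A B (finProdFinEquiv (i, k)) (finProdFinEquiv (j, l)) = A i j * B k l := by
  simp only [kron, of_apply, Equiv.symm_apply_apply]

theorem vecMul_kron_one_apply {R : Type*} [NonAssocSemiring R] {a b q : ℕ}
    (u : Fin (a * b) → R) (B : Matrix (Fin b) (Fin q) R) (m : Fin a) (t : Fin q) :
    (u ᵥ* kron (1 : Matrix (Fin a) (Fin a) R) B) (finProdFinEquiv (m, t)) =
      ∑ l, u (finProdFinEquiv (m, l)) * B l t := by
  rw [vecMul, dotProduct, ← finProdFinEquiv.sum_comp, Fintype.sum_prod_type,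
    Finset.sum_eq_single m]
  · simp
  · intro k _ hk
    simp [one_apply_ne hk]
  · simp

theorem finCongr_mul_one_symm_apply {a : ℕ} (m : Fin a) :
    finCongr (mul_one a).symm m = finProdFinEquiv (m, 0) := by
  ext; simp

theorem mul_map_val_apply_eq_zero_iff {ι κ ν : Type*} [Fintype κ] {n : ℕ}
    (Z : Matrix ι κ ℕ) (T : Matrix κ ν (ZMod n)) (m : ι) (j : ν) :
    (Z * T.map ZMod.val) m j = 0 ↔ ∀ l, Z m l ≠ 0 → T l j = 0 := by
  simp [mul_apply, Finset.sum_eq_zero_iff, ZMod.val_eq_zero, or_iff_not_imp_left]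

theorem forall_sum_comp_mul_eq_zero_iff {R ι κ : Type*} [Semiring R] [Fintype κ]
    {g : κ → ι} (hg : g.Injective) (F : Set ι) (c : κ → R) :
    (∀ u : ι → R, (∀ k ∈ F, u k = 0) → ∑ l, u (g l) * c l = 0) ↔ ∀ l, g l ∉ F → c l = 0 := by
  classical
  constructor
  · intro h l hl
    have := h (Pi.single (g l) 1) fun k hk => Pi.single_eq_of_ne (by rintro rfl; exact hl hk) _
    simpa [Pi.single_apply, hg.eq_iff] using this
  · intro h u hu
    refine Finset.sum_eq_zero fun l _ => ?_
    by_cases hl : g l ∈ F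
    · rw [hu _ hl, zero_mul]
    · rw [h l hl, mul_zero]

/-- Proposition 2, column component frozen sets: with `Z` the 0/1 matrix
over ℕ vanishing exactly on the positions of `F` and `Z_r = Z * T_{N_r}` computed over ℕ,
`Z_r(m,j) = 0` iff the `m`-th entry of the virtual input
`u_c^j = u · (I_{N_c} ⊗ T_{N_r}^{(·,j)})` is zero for every admissible `u`; hence the
frozen set of the `j`-th column component polar code is `F_c^j = { m | Z_r(m,j) = 0 }`. -/
theorem col_component_frozen_set {n_c n_r : ℕ}
    (F : Finset (Fin (2 ^ n_c * 2 ^ n_r)))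
    (Z : Matrix (Fin (2 ^ n_c)) (Fin (2 ^ n_r)) ℕ)
    (hZ : ∀ k l, Z k l = if finProdFinEquiv (k, l) ∈ F then 0 else 1)
    (Z_r : Matrix (Fin (2 ^ n_c)) (Fin (2 ^ n_r)) ℕ)
    (hZr : Z_r = Z * (Tpow n_r).map ZMod.val) :
    ∀ (j : Fin (2 ^ n_r)) (m : Fin (2 ^ n_c)),
      Z_r m j = 0 ↔
        ∀ u : Fin (2 ^ n_c * 2 ^ n_r) → ZMod 2, (∀ k ∈ F, u k = 0) →
          (u ᵥ* kron (1 : Matrix (Fin (2 ^ n_c)) (Fin (2 ^ n_c)) (ZMod 2))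
              (Matrix.of fun l (_ : Fin 1) => Tpow n_r l j))
            (finCongr (mul_one (2 ^ n_c)).symm m) = 0 := by
  intro j m
  rw [hZr, mul_map_val_apply_eq_zero_iff, finCongr_mul_one_symm_apply]
  simp only [vecMul_kron_one_apply, of_apply]
  have hrow : Function.Injective fun l : Fin (2 ^ n_r) => finProdFinEquiv (m, l) :=
    finProdFinEquiv.injective.comp (Prod.mk_right_injective m)
  simpa [hZ] using (forall_sum_comp_mul_eq_zero_iff hrow (F : Set _) (fun l => Tpow n_r l j)).symm
end
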